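/- If D1 and D2 are symmetric positive semidefinite real n×n matrices, then every eigenvalue of the product D = D1 * D2 is a nonnegative real number. -/

import Mathlib

/-!
With `S = √D1`, the matrices `D1 * D2 = S * (S * D2)` and `(S * D2) * S = Sᴴ * D2 * S` have the
same characteristic polynomial, and the latter is positive semidefinite, so the roots are its
eigenvalues: nonnegative reals.
-/

open Matrix Polynomial
open scoped ComplexOrder MatrixOrder

theorem Matrix.PosSemidef.exists_posSemidef_charpoly_mul_eq {𝕜 n : Type*} [RCLike 𝕜] [Fintype n]
    [DecidableEq n] {A B : Matrix n n 𝕜} (hA : A.PosSemidef) (hB : B.PosSemidef) :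
    ∃ C : Matrix n n 𝕜, C.PosSemidef ∧ (A * B).charpoly = C.charpoly := by
  set S := CFC.sqrt A
  have hS : S.IsHermitian := (CFC.sqrt_nonneg A).posSemidef.isHermitian
  refine ⟨Sᴴ * B * S, hB.conjTranspose_mul_mul_same S, ?_⟩
  rw [hS.eq, ← CFC.sqrt_mul_sqrt_self A hA.nonneg, mul_assoc, charpoly_mul_comm]

theorem Matrix.PosSemidef.exists_nonneg_eq_of_mem_roots_charpoly_map {n K : Type*} [Fintype n]
    [DecidableEq n] [Field K] [Algebra ℝ K] {A : Matrix n n ℝ} (hA : A.PosSemidef) {μ : K}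
    (hμ : μ ∈ (A.charpoly.map (algebraMap ℝ K)).roots) :
    ∃ r : ℝ, 0 ≤ r ∧ algebraMap ℝ K r = μ := by
  rw [hA.isHermitian.splits_charpoly.roots_map, hA.isHermitian.roots_charpoly_eq_eigenvalues] at hμ
  obtain ⟨i, -, rfl⟩ := by simpa using hμ
  exact ⟨_, hA.eigenvalues_nonneg i, rfl⟩

theorem stmt0 {n : ℕ} (D1 D2 : Matrix (Fin n) (Fin n) ℝ)
    (h1 : D1.PosSemidef) (h2 : D2.PosSemidef) :
    ∀ μ : ℂ, μ ∈ (((D1 * D2).charpoly).map (algebraMap ℝ ℂ)).roots →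
      μ.im = 0 ∧ 0 ≤ μ.re := by
  intro μ hμ
  obtain ⟨C, hC, hchar⟩ := h1.exists_posSemidef_charpoly_mul_eq h2
  rw [hchar] at hμ
  obtain ⟨r, hr, rfl⟩ := hC.exists_nonneg_eq_of_mem_roots_charpoly_map hμ
  exact ⟨Complex.ofReal_im r, hr⟩
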